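/- (Lemma 2.) Assume the connectivity graph G^H is connected, fix n̄ ∈ {1,…,d} and positive reals λ_n > 0 for n ≠ n̄, set λ_{n̄} = −Σ_{n ≠ n̄} λ_n, and let σ ∈ ℝ^d satisfy R^H σ = −λ. Define W_0(ρ) = Σ_{n=1}^d σ_n ⟨n|ρ|n⟩. Then for every n ∈ {1,…,d}, the real function u ↦ W_0(e^{−iuH} |n⟩⟨n| e^{iuH}) has second derivative at u = 0 equal to λ_n; in particular it is strictly positive for every n ≠ n̄ and equals λ_{n̄} = −Σ_{n ≠ n̄} λ_n < 0 for n = n̄. -/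

import Mathlib

open Matrix BigOperators

/-- `U_u = e^{−iuH}`, the matrix exponential of `−iuH`. -/
noncomputable def Uu {d : ℕ} (H : Matrix (Fin d) (Fin d) ℂ) (u : ℝ) :
    Matrix (Fin d) (Fin d) ℂ :=
  NormedSpace.exp ((-(Complex.I * (u : ℂ))) • H)

/-- The Laplacian matrix `R^H` with entries
`R^H_{n₁,n₂} = 2(δ_{n₁,n₂}⟨n₁|H²|n₂⟩ − |⟨n₁|H|n₂⟩|²)`. -/
noncomputable def RH {d : ℕ} (H : Matrix (Fin d) (Fin d) ℂ) : Matrix (Fin d) (Fin d) ℝ :=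
  Matrix.of fun n₁ n₂ =>
    2 * ((if n₁ = n₂ then ((H * H) n₁ n₂).re else 0) - Complex.normSq (H n₁ n₂))

/-- The connectivity graph `G^H`: vertices `{1,…,d}`, edge between `n₁ ≠ n₂` iff
`⟨n₁|H|n₂⟩ ≠ 0`. -/
def GH {d : ℕ} (H : Matrix (Fin d) (Fin d) ℂ) : SimpleGraph (Fin d) :=
  SimpleGraph.fromRel fun n₁ n₂ => H n₁ n₂ ≠ 0

/-- `W₀(ρ) = Σ_n σ_n ⟨n|ρ|n⟩`. -/
noncomputable def W0 {d : ℕ} (σ : Fin d → ℝ) (ρ : Matrix (Fin d) (Fin d) ℂ) : ℝ :=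
  ∑ k, σ k * (ρ k k).re

/-!
The evolved state `ρ(u) = e^{-iuH} ρ e^{iuH}` solves the von Neumann equation
`ρ' = -i[H, ρ]` and `W₀` is linear, so the second derivative of `W₀(ρ(u))` at `0` is
`W₀(-[H, [H, |n⟩⟨n|]])`. The real part of the `k`-th diagonal entry of `[H, [H, |n⟩⟨n|]]`
is `R^H_{kn}`, and `R^H` is symmetric for Hermitian `H`, so this value is `-(R^H σ)_n = λ_n`.
-/

theorem hasDerivAt_deriv_clm_comp_of_linear_ode {𝕜 E F : Type*} [NontriviallyNormedField 𝕜]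
    [NormedAddCommGroup E] [NormedSpace 𝕜 E] [NormedAddCommGroup F] [NormedSpace 𝕜 F]
    (Φ : E →L[𝕜] F) (L : E →L[𝕜] E) {ρ : 𝕜 → E} (hρ : ∀ t, HasDerivAt ρ (L (ρ t)) t)
    (t : 𝕜) :
    HasDerivAt (deriv fun u => Φ (ρ u)) (Φ (L (L (ρ t)))) t := by
  have hderiv : (deriv fun u => Φ (ρ u)) = fun u => Φ (L (ρ u)) :=
    funext fun u => (Φ.hasFDerivAt.comp_hasDerivAt u (hρ u)).deriv
  rw [hderiv]
  exact (Φ.comp L).hasFDerivAt.comp_hasDerivAt t (hρ t)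

theorem Matrix.conjTranspose_exp_real_smul {m : Type*} [Fintype m] [DecidableEq m]
    (A : Matrix m m ℂ) (u : ℝ) :
    (NormedSpace.exp (u • A))ᴴ = NormedSpace.exp (u • Aᴴ) := by
  rw [← Matrix.exp_conjTranspose, conjTranspose_smul, star_trivial]

section OperatorNorm

-- Matrices carry no global norm; any norm inducing the product topology serves for calculus.
attribute [local instance] Matrix.linftyOpNormedRing Matrix.linftyOpNormedAlgebra

theorem Matrix.hasDerivAt_exp_smul_mul_mul_conjTranspose {m : Type*} [Fintype m] [DecidableEq m]
    (A X : Matrix m m ℂ) (t : ℝ) :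
    HasDerivAt (fun u : ℝ => NormedSpace.exp (u • A) * X * (NormedSpace.exp (u • A))ᴴ)
      (A * (NormedSpace.exp (t • A) * X * (NormedSpace.exp (t • A))ᴴ) +
        NormedSpace.exp (t • A) * X * (NormedSpace.exp (t • A))ᴴ * Aᴴ) t := by
  simp only [conjTranspose_exp_real_smul]
  have := ((hasDerivAt_exp_smul_const' (𝕂 := ℝ) A t).mul_const X).mul
    (hasDerivAt_exp_smul_const (𝕂 := ℝ) Aᴴ t)
  rwa [← mul_assoc A, ← mul_assoc A, mul_assoc _ _ Aᴴ]

end OperatorNorm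

section Evolution

variable {d : ℕ}

theorem Uu_eq_exp (H : Matrix (Fin d) (Fin d) ℂ) (u : ℝ) :
    Uu H u = NormedSpace.exp (u • (-Complex.I) • H) := by
  rw [Uu, ← smul_assoc]
  congr 2
  simp [Complex.real_smul, mul_comm]

theorem Uu_zero (H : Matrix (Fin d) (Fin d) ℂ) : Uu H 0 = 1 := by
  rw [Uu_eq_exp, zero_smul, NormedSpace.exp_zero]

theorem hasDerivAt_Uu_conj {H : Matrix (Fin d) (Fin d) ℂ} (hH : H.IsHermitian)
    (X : Matrix (Fin d) (Fin d) ℂ) (t : ℝ) :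
    HasDerivAt (fun u : ℝ => Uu H u * X * (Uu H u)ᴴ)
      ((-Complex.I) • ⁅H, Uu H t * X * (Uu H t)ᴴ⁆) t := by
  simp only [Uu_eq_exp]
  convert Matrix.hasDerivAt_exp_smul_mul_mul_conjTranspose ((-Complex.I) • H) X t using 1
  rw [conjTranspose_smul, hH.eq, Ring.lie_def]
  simp [smul_sub]

noncomputable def liouvillianCLM (H : Matrix (Fin d) (Fin d) ℂ) :
    Matrix (Fin d) (Fin d) ℂ →L[ℝ] Matrix (Fin d) (Fin d) ℂ :=
  LinearMap.toContinuousLinearMap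
    { toFun := fun X => (-Complex.I) • ⁅H, X⁆
      map_add' := fun X Y => by
        simp only [Ring.lie_def, mul_add, add_mul, ← smul_add]
        abel_nf
      map_smul' := fun c X => by
        simp only [Ring.lie_def, Matrix.mul_smul, Matrix.smul_mul, ← smul_sub, smul_comm c,
          RingHom.id_apply] }

@[simp]
theorem liouvillianCLM_apply (H X : Matrix (Fin d) (Fin d) ℂ) :
    liouvillianCLM H X = (-Complex.I) • ⁅H, X⁆ :=
  rfl

theorem liouvillianCLM_liouvillianCLM (H X : Matrix (Fin d) (Fin d) ℂ) :
    liouvillianCLM H (liouvillianCLM H X) = -⁅H, ⁅H, X⁆⁆ := by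
  simp only [liouvillianCLM_apply, Ring.lie_def, Matrix.mul_smul, Matrix.smul_mul, ← smul_sub,
    smul_smul]
  simp

noncomputable def W0CLM (σ : Fin d → ℝ) : Matrix (Fin d) (Fin d) ℂ →L[ℝ] ℝ :=
  LinearMap.toContinuousLinearMap
    { toFun := W0 σ
      map_add' := fun ρ ρ' => by simp [W0, mul_add, Finset.sum_add_distrib]
      map_smul' := fun c ρ => by simp [W0, Finset.mul_sum, mul_left_comm] }

section OperatorNorm

attribute [local instance] Matrix.linftyOpNormedRing Matrix.linftyOpNormedAlgebra

theorem hasDerivAt_deriv_W0_Uu_conj {H : Matrix (Fin d) (Fin d) ℂ} (hH : H.IsHermitian)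
    (σ : Fin d → ℝ) (X : Matrix (Fin d) (Fin d) ℂ) :
    HasDerivAt (deriv fun u : ℝ => W0 σ (Uu H u * X * (Uu H u)ᴴ))
      (W0 σ (-⁅H, ⁅H, X⁆⁆)) 0 := by
  refine (hasDerivAt_deriv_clm_comp_of_linear_ode (W0CLM σ) (liouvillianCLM H)
    (hasDerivAt_Uu_conj hH X) 0).congr_deriv ?_
  change W0 σ (liouvillianCLM H (liouvillianCLM H (Uu H 0 * X * (Uu H 0)ᴴ))) = _
  rw [liouvillianCLM_liouvillianCLM, Uu_zero, conjTranspose_one, Matrix.one_mul, Matrix.mul_one]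

end OperatorNorm

end Evolution

section Laplacian

variable {d : ℕ} {H : Matrix (Fin d) (Fin d) ℂ}

theorem re_lie_lie_single_apply_self (hH : H.IsHermitian) (k n : Fin d) :
    (⁅H, ⁅H, Matrix.single n n (1 : ℂ)⁆⁆ k k).re = RH H k n := by
  have hsandwich : (H * Matrix.single n n (1 : ℂ) * H) k k = (Complex.normSq (H k n) : ℂ) := by
    calc (H * Matrix.single n n (1 : ℂ) * H) k k = H k n * H n k := by
          simp [Matrix.mul_apply, Matrix.single, ite_and]
      _ = H k n * star (H k n) := by rw [hH.apply]
      _ = Complex.normSq (H k n) := Complex.mul_conj _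
  simp only [Ring.lie_def, mul_sub, sub_mul, Matrix.sub_apply, RH, of_apply, ← mul_assoc,
    hsandwich]
  by_cases hkn : k = n
  · subst hkn
    simp only [mul_assoc, mul_single_apply_same, single_mul_apply_same, mul_one, one_mul,
      Complex.sub_re, Complex.ofReal_re, ↓reduceIte]
    ring
  · simp only [mul_assoc, mul_single_apply_of_ne _ _ _ _ _ hkn,
      single_mul_apply_of_ne _ _ _ _ _ hkn, zero_sub, sub_zero, Complex.sub_re, Complex.neg_re,
      Complex.ofReal_re, if_neg hkn, mul_zero]
    ring

theorem RH_apply_comm (hH : H.IsHermitian) (k n : Fin d) : RH H k n = RH H n k := by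
  by_cases hkn : k = n
  · rw [hkn]
  · rw [RH, of_apply, of_apply, if_neg hkn, if_neg (Ne.symm hkn), ← hH.apply n k,
      Complex.star_def, Complex.normSq_conj]

theorem W0_neg_lie_lie_single (hH : H.IsHermitian) (σ : Fin d → ℝ) (n : Fin d) :
    W0 σ (-⁅H, ⁅H, Matrix.single n n (1 : ℂ)⁆⁆) = -(RH H *ᵥ σ) n := by
  simp only [W0, Matrix.neg_apply, Complex.neg_re, re_lie_lie_single_apply_self hH, mulVec,
    dotProduct, RH_apply_comm hH _ n, ← Finset.sum_neg_distrib, mul_comm, mul_neg]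

end Laplacian

theorem stmt_13_general (d : ℕ) (H : Matrix (Fin d) (Fin d) ℂ)
    (hH : H.IsHermitian)
    (nbar : Fin d) (lam : Fin d → ℝ)
    (hpos : ∀ n, n ≠ nbar → 0 < lam n)
    (σ : Fin d → ℝ) (hσ : (RH H).mulVec σ = -lam) :
    (∀ n : Fin d,
      HasDerivAt
        (deriv (fun u : ℝ =>
          W0 σ (Uu H u * Matrix.single n n 1 * (Uu H u)ᴴ)))
        (lam n) 0) ∧
    (∀ n, n ≠ nbar → 0 < lam n) := by
  refine ⟨fun n => ?_, hpos⟩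
  have h := hasDerivAt_deriv_W0_Uu_conj hH σ (Matrix.single n n 1)
  rwa [W0_neg_lie_lie_single hH, hσ, Pi.neg_apply, neg_neg] at h

/-- Lemma 2: with `G^H` connected, `λ_n > 0` for `n ≠ n̄`,
`λ_{n̄} = −Σ_{n ≠ n̄} λ_n`, and `σ` satisfying `R^H σ = −λ`, the function
`u ↦ W₀(e^{−iuH}|n⟩⟨n|e^{iuH})` has second derivative at `u = 0` equal to `λ_n` for every
`n`; in particular it is strictly positive for `n ≠ n̄`. -/
theorem stmt_13 (d : ℕ) (hd : 1 ≤ d) (H : Matrix (Fin d) (Fin d) ℂ)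
    (hH : H.IsHermitian) (hconn : (GH H).Connected)
    (nbar : Fin d) (lam : Fin d → ℝ)
    (hpos : ∀ n, n ≠ nbar → 0 < lam n)
    (hbar : lam nbar = -∑ n ∈ Finset.univ.erase nbar, lam n)
    (σ : Fin d → ℝ) (hσ : (RH H).mulVec σ = -lam) :
    (∀ n : Fin d,
      HasDerivAt
        (deriv (fun u : ℝ =>
          W0 σ (Uu H u * Matrix.single n n 1 * (Uu H u)ᴴ)))
        (lam n) 0) ∧
    (∀ n, n ≠ nbar → 0 < lam n) :=
  stmt_13_general d H hH nbar lam hpos σ hσ
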